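/- Let r : R → ℤ be a non-archimedean function on a root system R, define r_m(α) = max{r(β) : β not strongly orthogonal to α} and k₀(α) = (r_m(α) − r(α))/2 (a half-integer). Then k₀ satisfies: (1) k₀(α) + k₀(−α) ≥ r_m(α) − r(α) for all α ∈ R (with equality); and (2) k₀(α) + k₀(β) − k₀(α+β) ≥ r(α+β) − min{r(α), r(β)} whenever α, β, α+β ∈ R. -/

import Mathlib

/-!
Two roots with positive inner product differ by a root or by zero. Consequently strongly
orthogonal roots are orthogonal, and a root strongly orthogonal to both `α` and `β` is strongly
orthogonal to `α + β`. Hence a root attaining `r_m(α + β)` is a competitor for `r_m(α)` or for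
`r_m(β)`, which together with the ultrametric inequality gives the three-root inequality
`r_m(α + β) + r(α + β) + |r(α) - r(β)| ≤ r_m(α) + r_m(β)`. Condition (2) is this inequality
rearranged, and (1) holds because `r` and `r_m` are even.
-/

variable {V : Type*} [NormedAddCommGroup V] [InnerProductSpace ℝ V] [DecidableEq V]

/-- A (crystallographic) root system, encoded as a finite subset of a real inner
product space: it does not contain `0`, is symmetric, is stable under the
reflections in its elements, and satisfies the integrality condition. -/
def IsCrystRootSet (R : Finset V) : Prop :=
  (0 : V) ∉ R ∧ (∀ α ∈ R, -α ∈ R) ∧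
  (∀ α ∈ R, ∀ β ∈ R, β - (2 * (inner ℝ β α : ℝ) / (inner ℝ α α : ℝ)) • α ∈ R) ∧
  (∀ α ∈ R, ∀ β ∈ R, ∃ z : ℤ, 2 * (inner ℝ β α : ℝ) = z * (inner ℝ α α : ℝ))

/-- Two roots are strongly orthogonal if neither their sum nor their difference
lies in `R ∪ {0}`. -/
def StronglyOrthogonal (R : Finset V) (α β : V) : Prop :=
  α + β ∉ R ∧ α - β ∉ R ∧ α + β ≠ 0 ∧ α - β ≠ 0

instance (R : Finset V) (α β : V) : Decidable (StronglyOrthogonal R α β) :=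
  inferInstanceAs (Decidable (α + β ∉ R ∧ α - β ∉ R ∧ α + β ≠ 0 ∧ α - β ≠ 0))

/-- `perp R S` is the set of roots strongly orthogonal to every root of `S`. -/
def perp (R : Finset V) (S : Finset V) : Finset V :=
  R.filter fun β => ∀ α ∈ S, StronglyOrthogonal R α β

/-- A function `r : R → ℤ` on a root system is non-archimedean if it is even and
satisfies the ultrametric inequality. -/
def NonArch (R : Finset V) (r : V → ℤ) : Prop :=
  (∀ α ∈ R, r (-α) = r α) ∧
  ∀ α ∈ R, ∀ β ∈ R, α + β ∈ R → min (r α) (r β) ≤ r (α + β)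

/-- `rm R r α` is the maximum of `r β` over the roots `β` not strongly
orthogonal to `α` (for `α ∈ R` this set contains `α` itself, so is nonempty). -/
def rm (R : Finset V) (r : V → ℤ) (α : V) : ℤ :=
  WithBot.unbotD (r α)
    (((R.filter fun β => ¬ StronglyOrthogonal R α β).image r).max)

namespace IsCrystRootSet

variable {R : Finset V} {α β : V}

omit [DecidableEq V] in
theorem sub_mem_of_two_inner_eq (hR : IsCrystRootSet R) (hα : α ∈ R) (hβ : β ∈ R)
    (h : 2 * inner ℝ β α = inner ℝ α α) : β - α ∈ R := by
  have hαα : inner ℝ α α ≠ (0 : ℝ) := (real_inner_self_pos.2 fun h0 ↦ hR.1 (h0 ▸ hα)).ne'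
  have := hR.2.2.1 α hα β hβ
  rwa [h, div_self hαα, one_smul] at this

theorem neg_mem_insert_zero_iff (hR : IsCrystRootSet R) {x : V} :
    -x ∈ insert 0 R ↔ x ∈ insert 0 R := by
  have key : ∀ y : V, y ∈ insert 0 R → -y ∈ insert 0 R := by
    intro y hy
    rcases Finset.mem_insert.1 hy with rfl | hy
    · simp
    · exact Finset.mem_insert_of_mem (hR.2.1 y hy)
  exact ⟨fun h ↦ neg_neg x ▸ key _ h, key x⟩

/-- With `m = 2⟪β, α⟫/⟪α, α⟫` and `n = 2⟪α, β⟫/⟪β, β⟫` positive integers, Cauchy–Schwarz gives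
`m n ≤ 4`; so `m = 1` or `n = 1` and a reflection produces `±(α - β)`, or `m = n = 2` and
`α = β`. -/
theorem sub_mem_insert_zero_of_inner_pos (hR : IsCrystRootSet R) (hα : α ∈ R) (hβ : β ∈ R)
    (h : 0 < inner ℝ α β) : α - β ∈ insert 0 R := by
  have hαα : (0 : ℝ) < inner ℝ α α := real_inner_self_pos.2 fun h0 ↦ hR.1 (h0 ▸ hα)
  have hββ : (0 : ℝ) < inner ℝ β β := real_inner_self_pos.2 fun h0 ↦ hR.1 (h0 ▸ hβ)
  have hcomm : inner ℝ β α = (inner ℝ α β : ℝ) := real_inner_comm α β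
  obtain ⟨m, hm⟩ := hR.2.2.2 α hα β hβ
  obtain ⟨n, hn⟩ := hR.2.2.2 β hβ α hα
  have hm0 : (0 : ℝ) < m := by nlinarith
  have hn0 : (0 : ℝ) < n := by nlinarith
  have hmn : (m * n : ℝ) ≤ 4 := by
    have := real_inner_mul_inner_self_le α β
    nlinarith [mul_pos hαα hββ]
  have hm1 : 1 ≤ m := by exact_mod_cast hm0
  have hn1 : 1 ≤ n := by exact_mod_cast hn0
  have hmn' : m * n ≤ 4 := by exact_mod_cast hmn
  have hm4 : m ≤ 4 := by nlinarith
  have hn4 : n ≤ 4 := by nlinarith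
  obtain rfl | rfl | ⟨rfl, rfl⟩ : n = 1 ∨ m = 1 ∨ (m = 2 ∧ n = 2) := by
    interval_cases m <;> interval_cases n <;> omega
  · exact Finset.mem_insert_of_mem (hR.sub_mem_of_two_inner_eq hβ hα (by simpa using hn))
  · rw [← neg_sub, hR.neg_mem_insert_zero_iff]
    exact Finset.mem_insert_of_mem (hR.sub_mem_of_two_inner_eq hα hβ (by simpa using hm))
  · refine Finset.mem_insert.2 (Or.inl (inner_self_eq_zero (𝕜 := ℝ) |>.1 ?_))
    rw [inner_sub_sub_self]
    push_cast at hm hn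
    linarith

end IsCrystRootSet

namespace StronglyOrthogonal

variable {R : Finset V} {α β δ : V}

omit [InnerProductSpace ℝ V] in
theorem iff_notMem_insert_zero :
    StronglyOrthogonal R α β ↔ α + β ∉ insert 0 R ∧ α - β ∉ insert 0 R := by
  simp only [StronglyOrthogonal, Finset.mem_insert, not_or]
  tauto

omit [InnerProductSpace ℝ V] [DecidableEq V] in
theorem not_self : ¬ StronglyOrthogonal R α α := fun h ↦ h.2.2.2 (sub_self α)

omit [InnerProductSpace ℝ V] in
theorem neg_right : StronglyOrthogonal R α (-β) ↔ StronglyOrthogonal R α β := by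
  simp only [iff_notMem_insert_zero, ← sub_eq_add_neg, sub_neg_eq_add, and_comm]

theorem neg_left (hR : IsCrystRootSet R) :
    StronglyOrthogonal R (-α) β ↔ StronglyOrthogonal R α β := by
  rw [iff_notMem_insert_zero, iff_notMem_insert_zero, show -α + β = -(α - β) by abel,
    show -α - β = -(α + β) by abel, hR.neg_mem_insert_zero_iff, hR.neg_mem_insert_zero_iff,
    and_comm]

theorem inner_eq_zero (hR : IsCrystRootSet R) (hα : α ∈ R) (hβ : β ∈ R)
    (h : StronglyOrthogonal R α β) : inner ℝ α β = 0 := by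
  rw [iff_notMem_insert_zero] at h
  rcases lt_trichotomy (inner ℝ α β) 0 with hlt | heq | hgt
  · have hpos : 0 < inner ℝ α (-β) := by rw [inner_neg_right]; linarith
    have := hR.sub_mem_insert_zero_of_inner_pos hα (hR.2.1 β hβ) hpos
    exact absurd (sub_neg_eq_add α β ▸ this) h.1
  · exact heq
  · exact absurd (hR.sub_mem_insert_zero_of_inner_pos hα hβ hgt) h.2

/-- If `ε = α + β + δ` were a root or zero, then `⟪α, ε⟫ + ⟪β, ε⟫ = ‖α + β‖² > 0`, so say
`⟪α, ε⟫ > 0`, and `α - ε = -(β + δ)` would be a root or zero. -/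
theorem add_add_notMem_insert_zero (hR : IsCrystRootSet R) (hα : α ∈ R) (hβ : β ∈ R)
    (hαβ : α + β ∈ R) (hδ : δ ∈ R) (hαδ : StronglyOrthogonal R α δ)
    (hβδ : StronglyOrthogonal R β δ) : α + β + δ ∉ insert 0 R := by
  intro hε
  have hsum : inner ℝ α (α + β + δ) + inner ℝ β (α + β + δ) = inner ℝ (α + β) (α + β) := by
    simp only [inner_add_left, inner_add_right, hαδ.inner_eq_zero hR hα hδ,
      hβδ.inner_eq_zero hR hβ hδ]
    ring
  have hpos : (0 : ℝ) < inner ℝ (α + β) (α + β) :=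
    real_inner_self_pos.2 fun h0 ↦ hR.1 (h0 ▸ hαβ)
  rcases Finset.mem_insert.1 hε with h0 | hε
  · rw [h0, inner_zero_right, inner_zero_right] at hsum
    linarith
  rcases lt_or_ge 0 (inner ℝ α (α + β + δ)) with hα' | hα'
  · have := hR.sub_mem_insert_zero_of_inner_pos hα hε hα'
    rw [show α - (α + β + δ) = -(β + δ) by abel, hR.neg_mem_insert_zero_iff] at this
    exact (iff_notMem_insert_zero.1 hβδ).1 this
  · have := hR.sub_mem_insert_zero_of_inner_pos hβ hε (by linarith)
    rw [show β - (α + β + δ) = -(α + δ) by abel, hR.neg_mem_insert_zero_iff] at this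
    exact (iff_notMem_insert_zero.1 hαδ).1 this

theorem add_left (hR : IsCrystRootSet R) (hα : α ∈ R) (hβ : β ∈ R) (hαβ : α + β ∈ R)
    (hδ : δ ∈ R) (hαδ : StronglyOrthogonal R α δ) (hβδ : StronglyOrthogonal R β δ) :
    StronglyOrthogonal R (α + β) δ := by
  refine iff_notMem_insert_zero.2 ⟨add_add_notMem_insert_zero hR hα hβ hαβ hδ hαδ hβδ, ?_⟩
  rw [sub_eq_add_neg]
  exact add_add_notMem_insert_zero hR hα hβ hαβ (hR.2.1 δ hδ) (neg_right.2 hαδ) (neg_right.2 hβδ)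

end StronglyOrthogonal

section RootMax

variable {R : Finset V} {r : V → ℤ} {α β : V}

omit [InnerProductSpace ℝ V] in
theorem rm_eq_max' (h : (R.filter fun β => ¬ StronglyOrthogonal R α β).Nonempty) :
    rm R r α = ((R.filter fun β => ¬ StronglyOrthogonal R α β).image r).max' (h.image r) := by
  rw [rm, ← Finset.coe_max' (h.image r), WithBot.unbotD_coe]

omit [InnerProductSpace ℝ V] in
theorem le_rm (hβ : β ∈ R) (h : ¬ StronglyOrthogonal R α β) : r β ≤ rm R r α := by
  have hmem : β ∈ R.filter fun β => ¬ StronglyOrthogonal R α β := Finset.mem_filter.2 ⟨hβ, h⟩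
  rw [rm_eq_max' ⟨β, hmem⟩]
  exact Finset.le_max' _ _ (Finset.mem_image_of_mem r hmem)

omit [InnerProductSpace ℝ V] in
theorem exists_rm_eq (hα : α ∈ R) :
    ∃ δ ∈ R, ¬ StronglyOrthogonal R α δ ∧ r δ = rm R r α := by
  have hne : (R.filter fun β => ¬ StronglyOrthogonal R α β).Nonempty :=
    ⟨α, Finset.mem_filter.2 ⟨hα, StronglyOrthogonal.not_self⟩⟩
  rw [rm_eq_max' hne]
  obtain ⟨δ, hδ, hδr⟩ := Finset.mem_image.1 (Finset.max'_mem _ (hne.image r))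
  exact ⟨δ, (Finset.mem_filter.1 hδ).1, (Finset.mem_filter.1 hδ).2, hδr⟩

theorem rm_neg (hR : IsCrystRootSet R) (hα : α ∈ R) : rm R r (-α) = rm R r α := by
  refine le_antisymm ?_ ?_
  · obtain ⟨δ, hδ, hαδ, hδα⟩ := exists_rm_eq (r := r) (hR.2.1 α hα)
    exact hδα ▸ le_rm hδ ((StronglyOrthogonal.neg_left hR).not.1 hαδ)
  · obtain ⟨δ, hδ, hαδ, hδα⟩ := exists_rm_eq (r := r) hα
    exact hδα ▸ le_rm hδ ((StronglyOrthogonal.neg_left hR).not.2 hαδ)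

end RootMax

namespace NonArch

variable {R : Finset V} {r : V → ℤ} {α β : V}

omit [DecidableEq V] in
theorem min_le_sub (hna : NonArch R r) (hR : IsCrystRootSet R) (hα : α ∈ R) (hβ : β ∈ R)
    (hαβ : α - β ∈ R) : min (r α) (r β) ≤ r (α - β) := by
  rw [← hna.1 β hβ, sub_eq_add_neg]
  exact hna.2 α hα (-β) (hR.2.1 β hβ) (sub_eq_add_neg α β ▸ hαβ)

/-- By the ultrametric inequality the two smallest of `r α`, `r β`, `r (α + β)` are equal. -/
theorem rm_add_add_abs_sub_le (hna : NonArch R r) (hR : IsCrystRootSet R) (hα : α ∈ R)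
    (hβ : β ∈ R) (hαβ : α + β ∈ R) :
    rm R r (α + β) + r (α + β) + |r α - r β| ≤ rm R r α + rm R r β := by
  obtain ⟨δ, hδ, hγδ, hδγ⟩ := exists_rm_eq (r := r) hαβ
  have hδαβ : r δ ≤ rm R r α ∨ r δ ≤ rm R r β :=
    (not_and_or.1 fun h ↦ hγδ (.add_left hR hα hβ hαβ hδ h.1 h.2)).imp (le_rm hδ) (le_rm hδ)
  have hα_α : r α ≤ rm R r α := le_rm hα StronglyOrthogonal.not_self
  have hβ_β : r β ≤ rm R r β := le_rm hβ StronglyOrthogonal.not_self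
  have hβ_α : r β ≤ rm R r α := le_rm hβ fun h ↦ h.1 hαβ
  have hα_β : r α ≤ rm R r β := le_rm hα fun h ↦ h.1 (add_comm α β ▸ hαβ)
  have hγ_α : r (α + β) ≤ rm R r α :=
    le_rm hαβ fun h ↦ h.2.1 (show α - (α + β) = -β by abel ▸ hR.2.1 β hβ)
  have hγ_β : r (α + β) ≤ rm R r β :=
    le_rm hαβ fun h ↦ h.2.1 (show β - (α + β) = -α by abel ▸ hR.2.1 α hα)
  have hγ := hna.2 α hα β hβ hαβ
  have hα' := add_sub_cancel_right α β ▸ hna.min_le_sub hR hαβ hβ (by simpa using hα)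
  have hβ' := add_sub_cancel_left α β ▸ hna.min_le_sub hR hαβ hα (by simpa using hβ)
  rcases abs_cases (r α - r β) with ⟨h, _⟩ | ⟨h, _⟩ <;> omega

end NonArch

/-- The half-integral function `k₀(α) = (r_m(α) − r(α))/2` satisfies the two
conditions characterizing root valuation lattices (with equality in the first). -/
theorem k0_conditions (R : Finset V) (hR : IsCrystRootSet R) (r : V → ℤ)
    (hna : NonArch R r) :
    (∀ α ∈ R,
      (((rm R r α : ℚ) - (r α : ℚ)) / 2) + (((rm R r (-α) : ℚ) - (r (-α) : ℚ)) / 2) =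
        (rm R r α : ℚ) - (r α : ℚ)) ∧
    (∀ α ∈ R, ∀ β ∈ R, α + β ∈ R →
      ((r (α + β) : ℚ) - (min (r α) (r β) : ℤ) ≤
        (((rm R r α : ℚ) - (r α : ℚ)) / 2) + (((rm R r β : ℚ) - (r β : ℚ)) / 2) -
          (((rm R r (α + β) : ℚ) - (r (α + β) : ℚ)) / 2))) := by
  refine ⟨fun α hα ↦ ?_, fun α hα β hβ hαβ ↦ ?_⟩
  · rw [rm_neg hR hα, hna.1 α hα]
    ring
  · have key : rm R r (α + β) + r (α + β) + r α + r β ≤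
        rm R r α + rm R r β + 2 * min (r α) (r β) := by
      have := hna.rm_add_add_abs_sub_le hR hα hβ hαβ
      rw [abs_sub_comm, ← max_sub_min_eq_abs] at this
      omega
    have key' := (Int.cast_le (R := ℚ)).2 key
    push_cast at key' ⊢
    linarith
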